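/- arXiv:2302.02613 — 3 statements merged into one kernel-verified Lean document; each statement's English description precedes it below -/
import Mathlib

section
/- Let $(\psi_\ell)_{\ell\ge 0}$ and $(\phi_j)_{j\ge 1}$ be real sequences with $\|\psi\|_0 := \sum_{\ell=0}^\infty |\psi_\ell| < \infty$ and $\sum_{j\ge 1} j|\phi_j| < \infty$, and define $\phi_k^m = \sum_{\ell=0}^{m-1} \psi_\ell \phi_{k+m-1-\ell}$. Then for every $n \ge 0$, $\sum_{m=1}^\infty \sum_{k=n+1}^\infty |\phi_k^m| \le \|\psi\|_0 \sum_{u=n+1}^\infty u\,|\phi_u|$. -/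
/-!
Bound `|φ_k^m|` by `∑_{ℓ<m} |ψ_ℓ| |φ_{k+m-1-ℓ}|` and move to `ℝ≥0∞`, where every double series
may be rearranged. Summing over `m` is then a Cauchy product, giving `‖ψ‖₀ ∑_j |φ_{k+j}|`, and
summing over `k ≥ n + 1` counts `|φ_u|` exactly `u - n ≤ u` times.
-/

open scoped ENNReal

namespace ENNReal

theorem tsum_sum_range_eq_tsum_tsum (f : ℕ → ℕ → ℝ≥0∞) :
    ∑' m, ∑ ℓ ∈ Finset.range (m + 1), f ℓ (m - ℓ) = ∑' ℓ, ∑' j, f ℓ j := by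
  rw [← ENNReal.tsum_prod,
    ← Finset.HasAntidiagonal.sigmaAntidiagonalEquivProd.tsum_eq (fun p : ℕ × ℕ => f p.1 p.2),
    ENNReal.tsum_sigma']
  refine tsum_congr fun m => ?_
  rw [tsum_fintype, ← Finset.Nat.sum_antidiagonal_eq_sum_range_succ f m,
    ← Finset.sum_coe_sort (Finset.HasAntidiagonal.antidiagonal m)]
  rfl

theorem tsum_mul_tsum_eq_tsum_sum_range (x a : ℕ → ℝ≥0∞) :
    (∑' ℓ, x ℓ) * ∑' j, a j = ∑' m, ∑ ℓ ∈ Finset.range (m + 1), x ℓ * a (m - ℓ) := by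
  rw [tsum_sum_range_eq_tsum_tsum (fun ℓ j => x ℓ * a j), ← ENNReal.tsum_mul_right]
  exact tsum_congr fun ℓ => ENNReal.tsum_mul_left.symm

theorem tsum_tsum_add (a : ℕ → ℝ≥0∞) :
    ∑' k, ∑' j, a (k + j) = ∑' u, (u + 1) * a u := by
  rw [← tsum_sum_range_eq_tsum_tsum fun k j => a (k + j)]
  refine tsum_congr fun u => ?_
  rw [Finset.sum_congr rfl fun ℓ hℓ => by rw [Nat.add_sub_cancel' (Finset.mem_range_succ_iff.1 hℓ)],
    Finset.sum_const, Finset.card_range, nsmul_eq_mul, Nat.cast_succ]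

theorem tsum_tsum_sum_range_mul (x a : ℕ → ℝ≥0∞) :
    ∑' m, ∑' k, ∑ ℓ ∈ Finset.range (m + 1), x ℓ * a (k + (m - ℓ)) =
      (∑' ℓ, x ℓ) * ∑' u, (u + 1) * a u := by
  rw [ENNReal.tsum_comm, ← tsum_tsum_add, ← ENNReal.tsum_mul_left]
  exact tsum_congr fun k => (tsum_mul_tsum_eq_tsum_sum_range x fun j => a (k + j)).symm

theorem ofReal_tsum_le_tsum_ofReal {α : Type*} {f : α → ℝ} (hf : ∀ i, 0 ≤ f i) :
    ENNReal.ofReal (∑' i, f i) ≤ ∑' i, ENNReal.ofReal (f i) := by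
  by_cases hs : Summable f
  · exact (ENNReal.ofReal_tsum_of_nonneg hf hs).le
  · simp [tsum_eq_zero_of_not_summable hs]

end ENNReal

theorem Real.tsum_tsum_le_of_ofReal_le {α β : Type*} {f : α → β → ℝ} (hf : ∀ a b, 0 ≤ f a b)
    {C : ℝ} (hC : 0 ≤ C) (h : ∑' a, ∑' b, ENNReal.ofReal (f a b) ≤ ENNReal.ofReal C) :
    ∑' a, ∑' b, f a b ≤ C := by
  refine (ENNReal.ofReal_le_ofReal_iff hC).1 (le_trans ?_ h)
  calc ENNReal.ofReal (∑' a, ∑' b, f a b)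
      ≤ ∑' a, ENNReal.ofReal (∑' b, f a b) :=
        ENNReal.ofReal_tsum_le_tsum_ofReal fun a => tsum_nonneg (hf a)
    _ ≤ ∑' a, ∑' b, ENNReal.ofReal (f a b) :=
        ENNReal.tsum_le_tsum fun a => ENNReal.ofReal_tsum_le_tsum_ofReal (hf a)

/-- With `∑_ℓ |ψ_ℓ| < ∞` and `∑_j j|φ_j| < ∞`, the double tail sum of the
`m`-step ahead predictor coefficients `φ_k^m = ∑_{ℓ=0}^{m-1} ψ_ℓ φ_{k+m-1-ℓ}` satisfies
`∑_{m=1}^∞ ∑_{k=n+1}^∞ |φ_k^m| ≤ ‖ψ‖₀ ∑_{u=n+1}^∞ u|φ_u|`. -/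
theorem multistep_double_tail_bound (ψ φ : ℕ → ℝ)
    (hψ : Summable fun ℓ => |ψ ℓ|)
    (hφ : Summable fun j : ℕ => (j : ℝ) * |φ j|) :
    ∀ n : ℕ,
      ∑' m : ℕ, ∑' k : ℕ,
          |∑ ℓ ∈ Finset.range (m + 1), ψ ℓ * φ (n + 1 + k + (m + 1) - 1 - ℓ)| ≤
        (∑' ℓ : ℕ, |ψ ℓ|) * ∑' u : ℕ, ((n + 1 + u : ℕ) : ℝ) * |φ (n + 1 + u)| := by
  intro n
  set x : ℕ → ℝ≥0∞ := fun ℓ => ‖ψ ℓ‖ₑ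
  set a : ℕ → ℝ≥0∞ := fun j => ‖φ (n + 1 + j)‖ₑ
  have hφ_tail : Summable fun u : ℕ => ((n + 1 + u : ℕ) : ℝ) * |φ (n + 1 + u)| := by
    simpa only [add_comm _ (n + 1)] using
      (summable_nat_add_iff (f := fun j : ℕ => (j : ℝ) * |φ j|) (n + 1)).2 hφ
  have hterm (m k : ℕ) :
      ENNReal.ofReal |∑ ℓ ∈ Finset.range (m + 1), ψ ℓ * φ (n + 1 + k + (m + 1) - 1 - ℓ)| ≤
        ∑ ℓ ∈ Finset.range (m + 1), x ℓ * a (k + (m - ℓ)) := by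
    rw [← Real.enorm_eq_ofReal_abs]
    refine (enorm_sum_le _ _).trans (Finset.sum_le_sum fun ℓ hℓ => ?_)
    have hidx : n + 1 + k + (m + 1) - 1 - ℓ = n + 1 + (k + (m - ℓ)) := by
      have := Finset.mem_range.1 hℓ
      omega
    rw [hidx, enorm_mul]
  have hrhs : ENNReal.ofReal ((∑' ℓ : ℕ, |ψ ℓ|) * ∑' u : ℕ, ((n + 1 + u : ℕ) : ℝ) * |φ (n + 1 + u)|)
      = (∑' ℓ, x ℓ) * ∑' u, ENNReal.ofReal ((n + 1 + u : ℕ) : ℝ) * a u := by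
    rw [ENNReal.ofReal_mul (tsum_nonneg fun _ => abs_nonneg _),
      ENNReal.ofReal_tsum_of_nonneg (fun _ => abs_nonneg _) hψ,
      ENNReal.ofReal_tsum_of_nonneg (fun _ => by positivity) hφ_tail]
    simp only [x, a, Real.enorm_eq_ofReal_abs, ENNReal.ofReal_mul (Nat.cast_nonneg _)]
  refine Real.tsum_tsum_le_of_ofReal_le (fun _ _ => abs_nonneg _) (by positivity) ?_
  calc ∑' m, ∑' k, ENNReal.ofReal |∑ ℓ ∈ Finset.range (m + 1), ψ ℓ * φ (n + 1 + k + (m + 1) - 1 - ℓ)|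
      ≤ ∑' m, ∑' k, ∑ ℓ ∈ Finset.range (m + 1), x ℓ * a (k + (m - ℓ)) :=
        ENNReal.tsum_le_tsum fun m => ENNReal.tsum_le_tsum fun k => hterm m k
    _ = (∑' ℓ, x ℓ) * ∑' u, (u + 1) * a u := ENNReal.tsum_tsum_sum_range_mul x a
    _ ≤ (∑' ℓ, x ℓ) * ∑' u, ENNReal.ofReal ((n + 1 + u : ℕ) : ℝ) * a u := by
        gcongr with u
        rw [ENNReal.ofReal_natCast, ← Nat.cast_succ]
        exact Nat.cast_le.2 (by omega)
    _ = _ := hrhs.symm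
end

section
/- If $(\psi_\ell)_{\ell\ge 0}$ and $(\phi_j)_{j\ge 0}$ satisfy $\sum_\ell (1+\ell)^\alpha |\psi_\ell| < \infty$ and $\sum_j (1+j)^\alpha |\phi_j| < \infty$ for some $\alpha \ge 0$, and $\phi_k^m := \sum_{\ell=0}^{m-1} \psi_\ell \phi_{k+m-1-\ell}$, then $\sup_{m\in\mathbb{N}} \sum_{k=n+1}^\infty |\phi_k^m| = o(n^{-\alpha})$ as $n \to \infty$. -/
open Filter Topology Finset

/-! The `m`-step coefficients are finite convolutions of `ψ` with shifted tails of `φ`, so every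
tail `∑_{k > n} |φ_k^m|` is at most `(∑ |ψ_ℓ|) · ∑_{j ≥ n} |φ_j|`, uniformly in `m`. The weight
condition on `φ` gives `n^α ∑_{j ≥ n} |φ_j| ≤ ∑_{j ≥ n} (1 + j)^α |φ_j| → 0`. -/

theorem summable_of_summable_one_add_rpow_mul {a : ℕ → ℝ} {α : ℝ} (hα : 0 ≤ α) (ha : 0 ≤ a)
    (h : Summable fun j : ℕ => (1 + j : ℝ) ^ α * a j) : Summable a :=
  h.of_nonneg_of_le ha fun j =>
    le_mul_of_one_le_left (ha j) (Real.one_le_rpow (by linarith [j.cast_nonneg (α := ℝ)]) hα)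

theorem tsum_nat_add_le_tsum_nat_add {f : ℕ → ℝ} (hf : Summable f) (h0 : 0 ≤ f) {N M : ℕ}
    (h : N ≤ M) : ∑' k, f (k + M) ≤ ∑' k, f (k + N) :=
  Summable.tsum_le_tsum_of_inj (fun k => k + (M - N)) (add_left_injective _)
    (fun _ _ => h0 _) (fun k => le_of_eq (by congr 1; omega))
    ((summable_nat_add_iff M).2 hf) ((summable_nat_add_iff N).2 hf)

theorem tendsto_rpow_mul_tsum_nat_add {a : ℕ → ℝ} {α : ℝ} (hα : 0 ≤ α) (ha : 0 ≤ a)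
    (h : Summable fun j : ℕ => (1 + j : ℝ) ^ α * a j) :
    Tendsto (fun n : ℕ => (n : ℝ) ^ α * ∑' k, a (k + n)) atTop (𝓝 0) := by
  have hsum := summable_of_summable_one_add_rpow_mul hα ha h
  refine squeeze_zero (fun n => mul_nonneg (by positivity) (tsum_nonneg fun k => ha _))
    (fun n => ?_) (tendsto_sum_nat_add fun j : ℕ => (1 + j : ℝ) ^ α * a j)
  rw [← tsum_mul_left]
  refine ((summable_nat_add_iff n).2 hsum).mul_left _ |>.tsum_le_tsum (fun k => ?_)
    ((summable_nat_add_iff n).2 h)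
  exact mul_le_mul_of_nonneg_right
    (Real.rpow_le_rpow n.cast_nonneg (by push_cast; linarith [k.cast_nonneg (α := ℝ)]) hα) (ha _)

theorem tsum_abs_sum_mul_nat_add_le {a b : ℕ → ℝ} (ha : Summable fun j => |a j|)
    (hb : Summable fun j => |b j|) (s : Finset ℕ) (N : ℕ → ℕ) {N₀ : ℕ}
    (hN : ∀ ℓ ∈ s, N₀ ≤ N ℓ) :
    ∑' k, |∑ ℓ ∈ s, a ℓ * b (k + N ℓ)| ≤ (∑' j, |a j|) * ∑' k, |b (k + N₀)| := by
  have hterm : ∀ ℓ ∈ s, Summable fun k => |a ℓ| * |b (k + N ℓ)| :=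
    fun ℓ _ => ((summable_nat_add_iff (N ℓ)).2 hb).mul_left _
  have hdom : Summable fun k => ∑ ℓ ∈ s, |a ℓ| * |b (k + N ℓ)| := summable_sum hterm
  have hpt : ∀ k, |∑ ℓ ∈ s, a ℓ * b (k + N ℓ)| ≤ ∑ ℓ ∈ s, |a ℓ| * |b (k + N ℓ)| := fun k =>
    (abs_sum_le_sum_abs _ _).trans_eq (by simp only [abs_mul])
  calc ∑' k, |∑ ℓ ∈ s, a ℓ * b (k + N ℓ)|
      ≤ ∑' k, ∑ ℓ ∈ s, |a ℓ| * |b (k + N ℓ)| :=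
        (hdom.of_nonneg_of_le (fun _ => abs_nonneg _) hpt).tsum_le_tsum hpt hdom
    _ = ∑ ℓ ∈ s, |a ℓ| * ∑' k, |b (k + N ℓ)| := by
        rw [Summable.tsum_finsetSum hterm]
        simp only [tsum_mul_left]
    _ ≤ ∑ ℓ ∈ s, |a ℓ| * ∑' k, |b (k + N₀)| :=
        sum_le_sum fun ℓ hℓ => mul_le_mul_of_nonneg_left
          (tsum_nat_add_le_tsum_nat_add hb (fun _ => abs_nonneg _) (hN ℓ hℓ)) (abs_nonneg _)
    _ ≤ (∑' j, |a j|) * ∑' k, |b (k + N₀)| := by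
        rw [← sum_mul]
        exact mul_le_mul_of_nonneg_right (ha.sum_le_tsum s fun _ _ => abs_nonneg _)
          (tsum_nonneg fun _ => abs_nonneg _)

/-- Under the short memory condition (SM_α), the uniform (over `m ≥ 1`) tail sums of the
`m`-step ahead predictor coefficients `φ_k^m = ∑_{ℓ=0}^{m-1} ψ_ℓ φ_{k+m-1-ℓ}` are `o(n^{-α})`. -/
theorem unif_multistep_tail_little_o (ψ φ : ℕ → ℝ) (α : ℝ) (hα : 0 ≤ α)
    (hψ : Summable fun ℓ : ℕ => (1 + ℓ : ℝ) ^ α * |ψ ℓ|)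
    (hφ : Summable fun j : ℕ => (1 + j : ℝ) ^ α * |φ j|) :
    Tendsto (fun n : ℕ => (n : ℝ) ^ α *
        ⨆ m : ℕ, ∑' k : ℕ,
          |∑ ℓ ∈ Finset.range (m + 1), ψ ℓ * φ (n + 1 + k + (m + 1) - 1 - ℓ)|)
      atTop (nhds 0) := by
  have habsψ := summable_of_summable_one_add_rpow_mul hα (fun _ => abs_nonneg _) hψ
  have habsφ := summable_of_summable_one_add_rpow_mul hα (fun _ => abs_nonneg _) hφ
  have htail : ∀ n m : ℕ, ∑' k : ℕ,
      |∑ ℓ ∈ Finset.range (m + 1), ψ ℓ * φ (n + 1 + k + (m + 1) - 1 - ℓ)| ≤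
        (∑' j, |ψ j|) * ∑' k, |φ (k + n)| := by
    intro n m
    have hidx : ∀ k, ∀ ℓ ∈ range (m + 1), n + 1 + k + (m + 1) - 1 - ℓ = k + (n + 1 + m - ℓ) :=
      fun k ℓ hℓ => by have := mem_range.1 hℓ; omega
    rw [tsum_congr fun k => congrArg abs (sum_congr rfl fun ℓ hℓ => by rw [hidx k ℓ hℓ])]
    exact tsum_abs_sum_mul_nat_add_le habsψ habsφ _ _ fun ℓ hℓ => by
      have := mem_range.1 hℓ; omega
  have hlim := (tendsto_rpow_mul_tsum_nat_add hα (fun _ => abs_nonneg _) hφ).const_mul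
    (∑' j, |ψ j|)
  rw [mul_zero] at hlim
  refine squeeze_zero (fun n => mul_nonneg (by positivity)
    (Real.iSup_nonneg fun m => tsum_nonneg fun k => abs_nonneg _)) (fun n => ?_) hlim
  rw [mul_left_comm]
  exact mul_le_mul_of_nonneg_left (ciSup_le (htail n)) (by positivity)
end

section
/- If $(\psi_\ell)_{\ell\ge 0}$ and $(\phi_j)_{j\ge 0}$ satisfy $\sum_\ell (1+\ell)^\alpha |\psi_\ell| < \infty$ and $\sum_j (1+j)^\alpha |\phi_j| < \infty$ for some $\alpha \ge 1$, and $\phi_k^m := \sum_{\ell=0}^{m-1} \psi_\ell \phi_{k+m-1-\ell}$, then $\sum_{m=1}^\infty \sum_{k=n+1}^\infty |\phi_k^m| = o(n^{-\alpha+1})$ as $n \to \infty$. -/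
/-!
Bounding `|φ_k^m|` by `∑_ℓ |ψ_ℓ| |φ_{k+m-1-ℓ}|` and summing over `k > n` and `m ≥ 1`, the
Cauchy product formula gives `(∑ |ψ_ℓ|) · ∑_{t,k ≥ 0} |φ_{n+1+t+k}|`, and the double sum equals
`∑_j (j + 1) |φ_{n+1+j}|`. Since `n^(α-1) (j + 1) ≤ (n + j + 2)^α`, multiplying by `n^(α-1)`
leaves at most a tail of the convergent series `∑_j (1 + j)^α |φ_j|`, which tends to `0`.
-/

open Filter Topology Finset

theorem Summable.tsum_le_tsum_of_nonneg {ι : Type*} {f g : ι → ℝ} (hg : Summable g)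
    (hf : ∀ i, 0 ≤ f i) (hfg : ∀ i, f i ≤ g i) : ∑' i, f i ≤ ∑' i, g i :=
  (hg.of_nonneg_of_le hf hfg).tsum_le_tsum hfg hg

/-- Grouping the pairs `(t, k)` by `t + k = j` gives `j + 1` copies of `d j`. -/
theorem hasSum_comp_add_of_nonneg {d : ℕ → ℝ} (hd : 0 ≤ d)
    (hw : Summable fun j : ℕ => ((j : ℝ) + 1) * d j) :
    HasSum (fun p : ℕ × ℕ => d (p.1 + p.2)) (∑' j : ℕ, ((j : ℝ) + 1) * d j) := by
  let e := Finset.HasAntidiagonal.sigmaAntidiagonalEquivProd (A := ℕ)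
  have hfiber : ∀ x : Σ j : ℕ, antidiagonal j, d ((e x).1 + (e x).2) = d x.1 := by
    rintro ⟨j, p, hp⟩
    simpa [e] using congrArg d (mem_antidiagonal.mp hp)
  have hcard : ∀ j : ℕ, ∑' _ : antidiagonal j, d j = ((j : ℝ) + 1) * d j := by
    intro j
    simp [tsum_fintype, Nat.card_antidiagonal]
  have hsigma : Summable fun x : Σ j : ℕ, antidiagonal j => d x.1 :=
    (summable_sigma_of_nonneg fun x => hd x.1).mpr
      ⟨fun _ => Summable.of_finite, by simpa only [hcard] using hw⟩
  rw [← e.hasSum_iff, ← funext hcard, ← hsigma.tsum_sigma]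
  exact hsigma.hasSum.congr_fun hfiber

theorem tsum_tsum_abs_sum_range_mul_le {a b : ℕ → ℝ} (ha : Summable fun ℓ => |a ℓ|)
    (hb : Summable fun j : ℕ => ((j : ℝ) + 1) * |b j|) :
    ∑' m, ∑' k, |∑ ℓ ∈ range (m + 1), a ℓ * b (m - ℓ + k)| ≤
      (∑' ℓ, |a ℓ|) * ∑' j : ℕ, ((j : ℝ) + 1) * |b j| := by
  have hprod := hasSum_comp_add_of_nonneg (fun j => abs_nonneg (b j)) hb
  have hshift : ∀ t, Summable fun k => |b (t + k)| := hprod.summable.prod_factor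
  let C : ℕ → ℝ := fun t => ∑' k, |b (t + k)|
  have hC : HasSum C (∑' j : ℕ, ((j : ℝ) + 1) * |b j|) :=
    hprod.prod_fiberwise fun t => (hshift t).hasSum
  have hC0 : 0 ≤ C := fun t => tsum_nonneg fun _ => abs_nonneg _
  have hinner : ∀ m, ∑' k, |∑ ℓ ∈ range (m + 1), a ℓ * b (m - ℓ + k)| ≤
      ∑ ℓ ∈ range (m + 1), |a ℓ| * C (m - ℓ) := by
    intro m
    have hsummand : ∀ ℓ ∈ range (m + 1), Summable fun k => |a ℓ| * |b (m - ℓ + k)| :=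
      fun ℓ _ => (hshift _).mul_left _
    calc ∑' k, |∑ ℓ ∈ range (m + 1), a ℓ * b (m - ℓ + k)|
        ≤ ∑' k, ∑ ℓ ∈ range (m + 1), |a ℓ| * |b (m - ℓ + k)| :=
          (summable_sum hsummand).tsum_le_tsum_of_nonneg (fun _ => abs_nonneg _) fun k =>
            (abs_sum_le_sum_abs _ _).trans_eq (by simp only [abs_mul])
      _ = ∑ ℓ ∈ range (m + 1), |a ℓ| * C (m - ℓ) := by
          rw [Summable.tsum_finsetSum hsummand]
          exact sum_congr rfl fun ℓ _ => tsum_mul_left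
  have hprodC := ha.mul_of_nonneg hC.summable (fun _ => abs_nonneg _) hC0
  calc ∑' m, ∑' k, |∑ ℓ ∈ range (m + 1), a ℓ * b (m - ℓ + k)|
      ≤ ∑' m, ∑ ℓ ∈ range (m + 1), |a ℓ| * C (m - ℓ) :=
        have hS : Summable fun m => ∑ ℓ ∈ range (m + 1), |a ℓ| * C (m - ℓ) :=
          summable_sum_mul_range_of_summable_mul hprodC
        hS.tsum_le_tsum_of_nonneg (fun _ => tsum_nonneg fun _ => abs_nonneg _) hinner
    _ = (∑' ℓ, |a ℓ|) * ∑' j : ℕ, ((j : ℝ) + 1) * |b j| := by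
      rw [← hC.tsum_eq, ha.tsum_mul_tsum_eq_tsum_sum_range hC.summable hprodC]

theorem Real.rpow_sub_one_mul_le_rpow_add {x y α : ℝ} (hx : 0 ≤ x) (hy : 0 ≤ y) (hα : 1 ≤ α) :
    x ^ (α - 1) * y ≤ (x + y) ^ α := by
  calc x ^ (α - 1) * y ≤ (x + y) ^ (α - 1) * (x + y) ^ (1 : ℝ) := by
        rw [Real.rpow_one]
        gcongr <;> linarith
    _ = (x + y) ^ α := by
        rw [← Real.rpow_add' (by linarith) (by linarith), sub_add_cancel]

theorem summable_abs_of_summable_one_add_rpow_mul {f : ℕ → ℝ} {α : ℝ} (hα : 0 ≤ α)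
    (hf : Summable fun j : ℕ => (1 + j : ℝ) ^ α * |f j|) : Summable fun j => |f j| :=
  hf.of_nonneg_of_le (fun _ => abs_nonneg _) fun j =>
    le_mul_of_one_le_left (abs_nonneg _) (Real.one_le_rpow (by simp) hα)

theorem rpow_sub_one_mul_succ_le_one_add_rpow {α : ℝ} (hα : 1 ≤ α) (n j : ℕ) :
    (n : ℝ) ^ (α - 1) * ((j : ℝ) + 1) ≤ (1 + ((j + (n + 1) : ℕ) : ℝ)) ^ α :=
  calc (n : ℝ) ^ (α - 1) * ((j : ℝ) + 1) ≤ ((n : ℝ) + ((j : ℝ) + 1)) ^ α :=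
        Real.rpow_sub_one_mul_le_rpow_add (by positivity) (by positivity) hα
    _ ≤ (1 + ((j + (n + 1) : ℕ) : ℝ)) ^ α :=
        Real.rpow_le_rpow (by positivity) (by push_cast; linarith) (by linarith)

theorem double_multistep_tail_le (ψ φ : ℕ → ℝ) {α : ℝ} (hα : 1 ≤ α)
    (hψ : Summable fun ℓ => |ψ ℓ|) (hφ : Summable fun j : ℕ => (1 + j : ℝ) ^ α * |φ j|)
    (n : ℕ) :
    (n : ℝ) ^ (α - 1) * ∑' m : ℕ, ∑' k : ℕ,
        |∑ ℓ ∈ range (m + 1), ψ ℓ * φ (n + 1 + k + (m + 1) - 1 - ℓ)| ≤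
      (∑' ℓ, |ψ ℓ|) * ∑' j : ℕ, (1 + ((j + (n + 1) : ℕ) : ℝ)) ^ α * |φ (j + (n + 1))| := by
  have htail := (summable_nat_add_iff (n + 1)).mpr hφ
  have hweight : Summable fun j : ℕ => ((j : ℝ) + 1) * |φ (j + (n + 1))| :=
    htail.of_nonneg_of_le (fun _ => by positivity) fun j =>
      mul_le_mul_of_nonneg_right ((by push_cast; linarith : (j : ℝ) + 1 ≤ _).trans
        (Real.self_le_rpow_of_one_le (by push_cast; linarith) hα)) (abs_nonneg _)
  have hindex : ∀ m k, ∀ ℓ ∈ range (m + 1),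
      n + 1 + k + (m + 1) - 1 - ℓ = m - ℓ + k + (n + 1) := fun m k ℓ hℓ => by
    have := mem_range.mp hℓ
    omega
  simp only [fun m k => sum_congr rfl fun ℓ hℓ => congrArg (ψ ℓ * φ ·) (hindex m k ℓ hℓ)]
  calc _ ≤ (n : ℝ) ^ (α - 1) *
        ((∑' ℓ, |ψ ℓ|) * ∑' j : ℕ, ((j : ℝ) + 1) * |φ (j + (n + 1))|) :=
        mul_le_mul_of_nonneg_left (tsum_tsum_abs_sum_range_mul_le hψ hweight) (by positivity)
    _ = (∑' ℓ, |ψ ℓ|) * ∑' j : ℕ, (n : ℝ) ^ (α - 1) * (((j : ℝ) + 1) * |φ (j + (n + 1))|) := by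
        rw [tsum_mul_left]; ring
    _ ≤ _ := by
        refine mul_le_mul_of_nonneg_left ((hweight.mul_left _).tsum_le_tsum (fun j => ?_) htail)
          (tsum_nonneg fun _ => abs_nonneg _)
        rw [← mul_assoc]
        exact mul_le_mul_of_nonneg_right (rpow_sub_one_mul_succ_le_one_add_rpow hα n j)
          (abs_nonneg _)

/-- Under the short memory condition (SM_α) with `α ≥ 1`, the double tail sums of the
`m`-step ahead predictor coefficients `φ_k^m = ∑_{ℓ=0}^{m-1} ψ_ℓ φ_{k+m-1-ℓ}` are `o(n^{-α+1})`. -/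
theorem double_multistep_tail_little_o (ψ φ : ℕ → ℝ) (α : ℝ) (hα : 1 ≤ α)
    (hψ : Summable fun ℓ : ℕ => (1 + ℓ : ℝ) ^ α * |ψ ℓ|)
    (hφ : Summable fun j : ℕ => (1 + j : ℝ) ^ α * |φ j|) :
    Tendsto (fun n : ℕ => (n : ℝ) ^ (α - 1) *
        ∑' m : ℕ, ∑' k : ℕ,
          |∑ ℓ ∈ Finset.range (m + 1), ψ ℓ * φ (n + 1 + k + (m + 1) - 1 - ℓ)|)
      atTop (nhds 0) := by
  have hψ₁ := summable_abs_of_summable_one_add_rpow_mul (by linarith) hψ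
  have htail : Tendsto (fun n : ℕ => ∑' j : ℕ,
      (1 + ((j + (n + 1) : ℕ) : ℝ)) ^ α * |φ (j + (n + 1))|) atTop (𝓝 0) :=
    (tendsto_sum_nat_add fun j : ℕ => (1 + j : ℝ) ^ α * |φ j|).comp (tendsto_add_atTop_nat 1)
  refine squeeze_zero (fun n => ?_) (double_multistep_tail_le ψ φ hα hψ₁ hφ) ?_
  · exact mul_nonneg (by positivity) (tsum_nonneg fun _ => tsum_nonneg fun _ => abs_nonneg _)
  · simpa using htail.const_mul (∑' ℓ, |ψ ℓ|)
end
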